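/- arXiv:2403.00149 — 7 statements merged into one kernel-verified Lean document; each statement's English description precedes it below -/
import Mathlib

section
/- Let P(x) = a₋₁x⁻¹ + a₀ + a₁x be an integer Laurent trinomial, define a_n = ct[P(x)^n], and let p be prime. Then for all n, a_n ≡ ∏ᵢ a_{dᵢ} (mod p), where d₀, d₁, … are the base-p digits of n. -/
open LaurentPolynomial

/-- The constant term of an integer Laurent polynomial. -/
noncomputable def ct (Q : LaurentPolynomial ℤ) : ℤ := Q.coeff 0

/-- The Laurent trinomial `a₋₁ x⁻¹ + a₀ + a₁ x`. -/
noncomputable def Ptri (am1 a0 a1 : ℤ) : LaurentPolynomial ℤ :=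
  C am1 * T (-1) + C a0 + C a1 * T 1

/-!
Reduce modulo `p`. Over `𝔽_p` the Frobenius gives `P(x)^p = P(x^p)`, so writing `n = d + p m`
with `d < p` we get `P^n = P^d · (P^m)(x^p)`. The support of `P^d` lies in `[-d, d] ⊆ (-p, p)`,
while `(P^m)(x^p)` is supported on multiples of `p`; hence only the two constant terms meet in the
constant term of the product, `a_n ≡ a_d · a_m`, and induction on the digits finishes.
-/

namespace LaurentPolynomial

section Semiring

open scoped Pointwise

variable {R : Type*} [Semiring R]

/-- The substitution `T ↦ T ^ k`. -/
noncomputable def expand (k : ℕ) : R[T;T⁻¹] →+* R[T;T⁻¹] :=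
  AddMonoidAlgebra.mapDomainRingHom R (AddMonoidHom.mulLeft (k : ℤ))

lemma expand_C_mul_T (k : ℕ) (r : R) (n : ℤ) : expand k (C r * T n) = C r * T (k * n) := by
  simp only [expand, ← single_eq_C_mul_T, AddMonoidAlgebra.mapDomainRingHom_apply,
    AddMonoidAlgebra.mapDomain_single, AddMonoidHom.coe_mulLeft]

lemma coeff_C_mul_T (r : R) (n m : ℤ) : (C r * T n).coeff m = if n = m then r else 0 := by
  rw [← single_eq_C_mul_T, AddMonoidAlgebra.coeff_single, Finsupp.single_apply]

lemma coeff_mul_C_mul_T (f : R[T;T⁻¹]) (r : R) (n m : ℤ) :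
    (f * (C r * T n)).coeff m = f.coeff (m - n) * r := by
  rw [← single_eq_C_mul_T, AddMonoidAlgebra.coeff_mul_single_apply, sub_eq_add_neg]

lemma coeff_zero_mul_expand {k : ℕ} {f : R[T;T⁻¹]} (hf : ∀ n ∈ f.coeff.support, |n| < k)
    (g : R[T;T⁻¹]) : (f * expand k g).coeff 0 = f.coeff 0 * g.coeff 0 := by
  induction g using LaurentPolynomial.induction_on' with
  | add g h hg hh =>
    simp only [map_add, mul_add, AddMonoidAlgebra.coeff_add, Finsupp.add_apply, hg, hh]
  | C_mul_T n r =>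
    rw [expand_C_mul_T, coeff_mul_C_mul_T, coeff_C_mul_T]
    rcases eq_or_ne n 0 with rfl | hn
    · simp
    · have hfar : f.coeff (-(k * n)) = 0 := by
        refine Finsupp.notMem_support_iff.mp fun hmem => (hf _ hmem).not_ge ?_
        rw [abs_neg, abs_mul, Nat.abs_cast]
        exact le_mul_of_one_le_right (by positivity) (Int.one_le_abs hn)
      simp [zero_sub, hfar, hn]

lemma support_pow_subset_Icc {f : R[T;T⁻¹]} {r : ℤ} (hf : f.coeff.support ⊆ Finset.Icc (-r) r)
    (d : ℕ) : (f ^ d).coeff.support ⊆ Finset.Icc (-(d * r)) (d * r) := by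
  classical
  induction d with
  | zero =>
    rw [pow_zero, Nat.cast_zero, zero_mul, neg_zero, Finset.Icc_self]
    exact Finsupp.support_single_subset
  | succ d ih =>
    calc (f ^ (d + 1)).coeff.support
        ⊆ (f ^ d).coeff.support + f.coeff.support := by
          rw [pow_succ]; exact AddMonoidAlgebra.support_coeff_mul_subset _ _
      _ ⊆ Finset.Icc (-(d * r)) (d * r) + Finset.Icc (-r) r := Finset.add_subset_add ih hf
      _ ⊆ Finset.Icc (-(d * r) + -r) (d * r + r) := Finset.Icc_add_Icc_subset _ _ _ _
      _ = Finset.Icc (-((d + 1 : ℕ) * r)) ((d + 1 : ℕ) * r) := by push_cast; ring_nf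

lemma support_trinomial_subset (a b c : R) :
    (C a * T (-1) + C b + C c * T 1).coeff.support ⊆ Finset.Icc (-1) 1 := by
  refine Finsupp.support_add.trans (Finset.union_subset
    (Finsupp.support_add.trans (Finset.union_subset ?_ ?_)) ?_)
  · exact (support_C_mul_T a (-1)).trans (by simp)
  · rw [← mul_one (C b), ← T_zero]
    exact (support_C_mul_T b 0).trans (by simp)
  · exact (support_C_mul_T c 1).trans (by simp)

lemma support_mapRingHom_subset {S : Type*} [Semiring S] (φ : R →+* S) (f : R[T;T⁻¹]) :
    (AddMonoidAlgebra.mapRingHom ℤ φ f).coeff.support ⊆ f.coeff.support := by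
  intro n
  simp only [Finsupp.mem_support_iff, AddMonoidAlgebra.coeff_mapRingHom]
  exact mt fun h => by rw [h, map_zero]

end Semiring

section ZMod

variable {p : ℕ} [Fact p.Prime]

lemma pow_char_eq_expand (f : (ZMod p)[T;T⁻¹]) : f ^ p = expand p f := by
  have : CharP (ZMod p)[T;T⁻¹] p := charP_of_injective_algebraMap' (ZMod p) p
  induction f using LaurentPolynomial.induction_on' with
  | add f g hf hg => rw [add_pow_char, hf, hg, map_add]
  | C_mul_T n r => rw [expand_C_mul_T, mul_pow, ← map_pow, ZMod.pow_card, T_pow]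

lemma coeff_zero_pow_add_mul {f : (ZMod p)[T;T⁻¹]} (hf : f.coeff.support ⊆ Finset.Icc (-1) 1)
    {d : ℕ} (hd : d < p) (m : ℕ) :
    (f ^ (d + p * m)).coeff 0 = (f ^ d).coeff 0 * (f ^ m).coeff 0 := by
  rw [pow_add, pow_mul, pow_char_eq_expand, ← map_pow]
  refine coeff_zero_mul_expand (fun n hn => ?_) _
  have := support_pow_subset_Icc (by simpa using hf) d hn
  rw [Finset.mem_Icc] at this
  rw [abs_lt]
  omega

lemma coeff_zero_pow_eq_prod_digits {f : (ZMod p)[T;T⁻¹]}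
    (hf : f.coeff.support ⊆ Finset.Icc (-1) 1) (n : ℕ) :
    (f ^ n).coeff 0 = ((Nat.digits p n).map fun d => (f ^ d).coeff 0).prod := by
  have hp := (Fact.out : p.Prime)
  induction n using Nat.strong_induction_on with
  | _ n ih =>
    rcases Nat.eq_zero_or_pos n with rfl | hn
    · rw [pow_zero, Nat.digits_zero, List.map_nil, List.prod_nil, AddMonoidAlgebra.one_def,
        AddMonoidAlgebra.coeff_single, Finsupp.single_eq_same]
    · rw [Nat.digits_def' hp.one_lt hn, List.map_cons, List.prod_cons,
        ← ih (n / p) (Nat.div_lt_self hn hp.one_lt),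
        ← coeff_zero_pow_add_mul hf (Nat.mod_lt n hp.pos), Nat.mod_add_div]

end ZMod

end LaurentPolynomial

theorem stmt_3 (am1 a0 a1 : ℤ) (p : ℕ) (hp : p.Prime) (n : ℕ) :
    ct ((Ptri am1 a0 a1) ^ n) ≡
      ((Nat.digits p n).map (fun d => ct ((Ptri am1 a0 a1) ^ d))).prod [ZMOD (p : ℤ)] := by
  have : Fact p.Prime := ⟨hp⟩
  set ρ := AddMonoidAlgebra.mapRingHom ℤ (Int.castRingHom (ZMod p))
  have hρ (d : ℕ) : (ct (Ptri am1 a0 a1 ^ d) : ZMod p) = (ρ (Ptri am1 a0 a1) ^ d).coeff 0 := by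
    rw [← map_pow, AddMonoidAlgebra.coeff_mapRingHom]; rfl
  have hsupp : (ρ (Ptri am1 a0 a1)).coeff.support ⊆ Finset.Icc (-1) 1 :=
    (support_mapRingHom_subset _ _).trans (support_trinomial_subset am1 a0 a1)
  rw [← ZMod.intCast_eq_intCast_iff, hρ, coeff_zero_pow_eq_prod_digits hsupp, Int.cast_list_prod,
    List.map_map]
  simp only [Function.comp_def, hρ]
end

section
/- Let T_n = ct[(x⁻¹ + 1 + x)^n] be the central trinomial coefficients and M_n = ct[(x⁻¹ + 1 + x)^n (1 − x²)] the Motzkin numbers. Then 2·M_n = 3·T_n + 2·T_{n+1} − T_{n+2} for all n ≥ 0. -/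
open LaurentPolynomial

/-!
Write `P = T (-1) + 1 + T 1`. Since `3 + 2 P - P ^ 2 = 2 - T (-2) - T 2`, the right-hand side is
`ct (P ^ n * (2 - T (-2) - T 2))`, which equals `2 * ct (P ^ n * (1 - T 2))` because `P ^ n` is
invariant under `T ↦ T⁻¹`, so its coefficients at `2` and `-2` agree.
-/

namespace LaurentPolynomial

variable {R : Type*}

theorem coeff_mul_T [Semiring R] (f : R[T;T⁻¹]) (n m : ℤ) :
    (f * T n).coeff m = f.coeff (m - n) := by
  rw [T, AddMonoidAlgebra.coeff_mul_single_apply, mul_one, sub_eq_add_neg]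

theorem coeff_neg_of_invert_eq [CommSemiring R] {f : R[T;T⁻¹]} (hf : invert f = f) (m : ℤ) :
    f.coeff (-m) = f.coeff m := by
  rw [← invert_apply, hf]

theorem invert_T_neg_one_add_one_add_T_one [CommSemiring R] :
    invert (T (-1) + 1 + T 1 : R[T;T⁻¹]) = T (-1) + 1 + T 1 := by
  simp only [map_add, map_one, invert_T, neg_neg]
  ring

theorem three_add_two_mul_sub_sq_T_neg_one_add_one_add_T_one [CommRing R] :
    (3 + 2 * (T (-1) + 1 + T 1) - (T (-1) + 1 + T 1) ^ 2 : R[T;T⁻¹]) = 2 - T (-2) - T 2 := by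
  have h_neg_two : (T (-1) * T (-1) : R[T;T⁻¹]) = T (-2) := by rw [← T_add]; norm_num
  have h_two : (T 1 * T 1 : R[T;T⁻¹]) = T 2 := by rw [← T_add]; norm_num
  have h_zero : (T (-1) * T 1 : R[T;T⁻¹]) = 1 := by rw [← T_add, neg_add_cancel, T_zero]
  linear_combination -(h_neg_two + h_two + 2 * h_zero)

end LaurentPolynomial

theorem ct_add (f g : ℤ[T;T⁻¹]) : ct (f + g) = ct f + ct g := rfl

theorem ct_sub (f g : ℤ[T;T⁻¹]) : ct (f - g) = ct f - ct g := rfl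

theorem ct_zsmul (k : ℤ) (f : ℤ[T;T⁻¹]) : ct (k • f) = k * ct f := rfl

theorem ct_mul_T (f : ℤ[T;T⁻¹]) (n : ℤ) : ct (f * T n) = f.coeff (-n) := by
  rw [ct, coeff_mul_T, zero_sub]

theorem ct_mul_two_sub_T_neg_two_sub_T_two {f : ℤ[T;T⁻¹]} (hf : invert f = f) :
    ct (f * (2 - T (-2) - T 2)) = 2 * ct (f * (1 - T 2)) := by
  have hsplit : f * (2 - T (-2) - T 2) = (2 : ℤ) • (f * (1 - T 2)) + (f * T 2 - f * T (-2)) := by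
    ring
  rw [hsplit, ct_add, ct_zsmul, ct_sub, ct_mul_T, ct_mul_T, neg_neg,
    coeff_neg_of_invert_eq hf, sub_self, add_zero]

theorem stmt_7 (n : ℕ) :
    2 * ct ((T (-1) + 1 + T 1) ^ n * (1 - T 2)) =
      3 * ct ((T (-1) + 1 + T 1) ^ n) + 2 * ct ((T (-1) + 1 + T 1) ^ (n + 1))
        - ct ((T (-1) + 1 + T 1) ^ (n + 2)) := by
  set P : ℤ[T;T⁻¹] := T (-1) + 1 + T 1
  have hsymm : invert (P ^ n) = P ^ n := by rw [map_pow, invert_T_neg_one_add_one_add_T_one]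
  have hcombine : (3 : ℤ) • P ^ n + (2 : ℤ) • P ^ (n + 1) - P ^ (n + 2)
      = P ^ n * (3 + 2 * P - P ^ 2) := by ring
  rw [← ct_zsmul 3, ← ct_zsmul 2 (P ^ (n + 1)), ← ct_add, ← ct_sub, hcombine,
    three_add_two_mul_sub_sq_T_neg_one_add_one_add_T_one,
    ct_mul_two_sub_T_neg_two_sub_T_two hsymm]
end

section
/- Let M_n be the Motzkin numbers. For every integer k > 1 and every integer n with 2·3^k ≤ n ≤ 2·3^k + 3^{k−1}, M_n ≡ 0 (mod 3). -/
/-!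
Write `n = 2N + m` with `N = 3^k`, so `m ≤ N / 3`. Modulo 3 the Frobenius gives
`(x⁻¹ + 1 + x)^N ≡ x^(-N) + 1 + x^N`, hence the Laurent polynomial is congruent to
`(x^(-N) + 1 + x^N)^2 Q` with `Q = (x⁻¹ + 1 + x)^m (1 - x²)`. Since `Q` is supported in
`[-m, m + 2] ⊆ (-N, N)` (as `N ≥ 9`), the only contributions to the constant term are the three products
`x^(-N) x^N Q₀`, `1 · 1 · Q₀`, `x^N x^(-N) Q₀`, which sum to `3 Q₀ ≡ 0`.
-/

open LaurentPolynomial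

open Finset

namespace AddMonoidAlgebra

variable {R A : Type*} [Semiring R] [AddMonoid A] [Preorder A] [DecidableEq A]
  [LocallyFiniteOrder A] [AddLeftMono A] [AddRightMono A]

theorem support_coeff_mul_subset_Icc {f g : AddMonoidAlgebra R A} {a b c d : A}
    (hf : f.coeff.support ⊆ Icc a b) (hg : g.coeff.support ⊆ Icc c d) :
    (f * g).coeff.support ⊆ Icc (a + c) (b + d) :=
  (support_coeff_mul_subset f g).trans <|
    (add_subset_add hf hg).trans (Icc_add_Icc_subset a b c d)

theorem support_coeff_pow_subset_Icc {f : AddMonoidAlgebra R A} {a b : A}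
    (hf : f.coeff.support ⊆ Icc a b) : ∀ n : ℕ, (f ^ n).coeff.support ⊆ Icc (n • a) (n • b)
  | 0 => by
    rw [pow_zero, zero_nsmul, zero_nsmul]
    exact support_coeff_one_subset.trans (by simp)
  | n + 1 => by
    rw [pow_succ, succ_nsmul, succ_nsmul]
    exact support_coeff_mul_subset_Icc (support_coeff_pow_subset_Icc hf n) hf

end AddMonoidAlgebra

namespace LaurentPolynomial

section Semiring

variable {R : Type*} [Semiring R]

theorem coeff_T (n m : ℤ) : (T n : R[T;T⁻¹]).coeff m = if n = m then 1 else 0 :=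
  Finsupp.single_apply

theorem coeff_T_mul (n : ℤ) (f : R[T;T⁻¹]) (m : ℤ) : (T n * f).coeff m = f.coeff (m - n) := by
  rw [T, AddMonoidAlgebra.coeff_single_mul_apply, one_mul, neg_add_eq_sub]

theorem coeff_T_neg_add_one_add_T_mul (N : ℤ) (f : R[T;T⁻¹]) (z : ℤ) :
    ((T (-N) + 1 + T N) * f).coeff z = f.coeff (z + N) + f.coeff z + f.coeff (z - N) := by
  rw [add_mul, add_mul, one_mul]
  simp only [AddMonoidAlgebra.coeff_add, Finsupp.add_apply, coeff_T_mul, sub_neg_eq_add]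

theorem coeff_zero_T_neg_add_one_add_T_sq_mul {N : ℤ} {Q : R[T;T⁻¹]}
    (hQ : Q.coeff.support ⊆ Icc (1 - N) (N - 1)) :
    ((T (-N) + 1 + T N) ^ 2 * Q).coeff 0 = 3 * Q.coeff 0 := by
  have hvanish : ∀ z, (z ≤ -N ∨ N ≤ z) → Q.coeff z = 0 := fun z hz ↦ by
    by_contra h
    have := mem_Icc.mp (hQ (Finsupp.mem_support_iff.mpr h))
    omega
  rw [sq, mul_assoc]
  simp only [coeff_T_neg_add_one_add_T_mul]
  rw [hvanish (0 + N + N) (by omega), hvanish (0 + N) (by omega), hvanish (0 - N) (by omega),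
    hvanish (0 - N - N) (by omega)]
  simp only [zero_add, add_zero, zero_sub, sub_self, neg_add_cancel]
  noncomm_ring

theorem mapRingHom_T {S : Type*} [Semiring S] (φ : R →+* S) (n : ℤ) :
    AddMonoidAlgebra.mapRingHom ℤ φ (T n) = T n := by
  change AddMonoidAlgebra.map _ (AddMonoidAlgebra.single n 1) = _
  rw [AddMonoidAlgebra.map_single]
  exact congrArg _ (map_one φ)

end Semiring

theorem T_neg_add_one_add_T_pow_char_pow {R : Type*} [CommSemiring R] (p : ℕ) [ExpChar R p]
    (a : ℤ) (k : ℕ) :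
    (T (-a) + 1 + T a : R[T;T⁻¹]) ^ p ^ k = T (-(p ^ k * a)) + 1 + T (p ^ k * a) := by
  have : ExpChar R[T;T⁻¹] p :=
    expChar_of_injective_ringHom (f := C) AddMonoidAlgebra.single_right_injective p
  rw [add_pow_expChar_pow, add_pow_expChar_pow, one_pow, T_pow, T_pow]
  push_cast
  ring_nf

theorem support_coeff_pow_mul_one_sub_T_two_subset {R : Type*} [Ring R] (m : ℕ) :
    ((T (-1) + 1 + T 1 : R[T;T⁻¹]) ^ m * (1 - T 2)).coeff.support ⊆ Icc (-(m : ℤ)) (m + 2) := by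
  have hP : (T (-1) + 1 + T 1 : R[T;T⁻¹]).coeff.support ⊆ Icc (-1) 1 := fun z hz ↦ by
    contrapose! hz
    rw [mem_Icc] at hz
    rw [Finsupp.notMem_support_iff, ← T_zero]
    simp only [AddMonoidAlgebra.coeff_add, Finsupp.add_apply, coeff_T]
    split_ifs <;> first | omega | simp
  have hD : (1 - T 2 : R[T;T⁻¹]).coeff.support ⊆ Icc 0 2 := fun z hz ↦ by
    contrapose! hz
    rw [mem_Icc] at hz
    rw [Finsupp.notMem_support_iff, ← T_zero]
    simp only [AddMonoidAlgebra.coeff_sub, Finsupp.sub_apply, coeff_T]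
    split_ifs <;> first | omega | simp
  simpa using AddMonoidAlgebra.support_coeff_mul_subset_Icc
    (AddMonoidAlgebra.support_coeff_pow_subset_Icc hP m) hD

theorem natCast_dvd_coeff_iff (n : ℕ) (f : ℤ[T;T⁻¹]) (z : ℤ) :
    (n : ℤ) ∣ f.coeff z ↔ (AddMonoidAlgebra.mapRingHom ℤ (Int.castRingHom (ZMod n)) f).coeff z = 0 :=
  (ZMod.intCast_zmod_eq_zero_iff_dvd _ _).symm

end LaurentPolynomial

theorem stmt_11 (k n : ℕ) (hk : 1 < k) (h1 : 2 * 3 ^ k ≤ n) (h2 : n ≤ 2 * 3 ^ k + 3 ^ (k - 1)) :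
    (3 : ℤ) ∣ ct ((T (-1) + 1 + T 1) ^ n * (1 - T 2)) := by
  obtain ⟨m, rfl⟩ : ∃ m, n = 3 ^ k * 2 + m := ⟨n - 2 * 3 ^ k, by omega⟩
  have hm : (m : ℤ) + 3 ≤ 3 ^ k := by
    have : 3 ^ k = 3 * 3 ^ (k - 1) := by rw [← pow_succ']; congr 1; omega
    have : 3 ≤ 3 ^ (k - 1) := Nat.le_self_pow (by omega) 3
    exact_mod_cast (by omega : m + 3 ≤ 3 ^ k)
  apply (natCast_dvd_coeff_iff 3 _ 0).mpr
  simp only [map_mul, map_pow, map_add, map_sub, map_one, mapRingHom_T]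
  rw [pow_add, pow_mul, T_neg_add_one_add_T_pow_char_pow 3 1 k, mul_assoc,
    coeff_zero_T_neg_add_one_add_T_sq_mul]
  · rw [show (3 : ZMod 3) = 0 from rfl, zero_mul]
  · refine (support_coeff_pow_mul_one_sub_T_two_subset m).trans (Icc_subset_Icc ?_ ?_) <;>
    · push_cast
      omega
end

section
/- Let P(x) = a₋₁x⁻¹ + a₀ + a₁x with integer coefficients, a_n = ct[P(x)^n], p a prime dividing some a_n, and b_n = Σ_{i=0}^{h} c_i·a_{n+i} with integer c_i. Then the set {n : p ∣ b_n} has natural density 1. -/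
/-!
Write `P = x⁻¹ g(x)` with `g` a polynomial of degree at most `2`, so that `a_n` is the coefficient
of `xⁿ` in `gⁿ`. Modulo `p` we have `g ^ (p m + r) = g(xᵖ) ^ m * g ^ r`, and since `deg g ≤ 2` this
gives the Lucas-type factorisation `a_{pm+r} ≡ a_m a_r` for `r < p`. Hence if `p ∣ a_n` for some
`n`, then `p ∣ a_d` for some `d < p`, and `p ∣ a_n` whenever `d` is a base-`p` digit of `n`.
If the base-`p` digits of `n` in positions `k + 1, k` are `d, 0` and `p ^ k > h`, then adding
`i ≤ h` does not change digit `k + 1`, so `p` divides every `a_{n+i}` and thus `b_n`. Almost every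
`n` carries such a block: below `p ^ h * (p²) ^ L`, at most `p ^ h * (p² - 1) ^ L` integers avoid
it at all of the positions `h, h + 2, …, h + 2 (L - 1)`.
-/

open LaurentPolynomial

theorem coeff_zero_toLaurent_mul_T_neg_one_pow {R : Type*} [Semiring R] (g : Polynomial R) (n : ℕ) :
    ((Polynomial.toLaurent g * T (-1)) ^ n).coeff 0 = (g ^ n).coeff n := by
  rw [((commute_T (-1) _).symm).mul_pow, ← map_pow, T_pow, mul_neg_one, T,
    AddMonoidAlgebra.coeff_mul_single_apply, zero_add, neg_neg, mul_one, coeff_toLaurent]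
  exact Finsupp.mapDomain_apply Nat.castEmbedding.injective _ _

theorem exists_Ptri_eq_toLaurent_mul_T (am1 a0 a1 : ℤ) :
    ∃ g : Polynomial ℤ, g.natDegree ≤ 2 ∧ Ptri am1 a0 a1 = Polynomial.toLaurent g * T (-1) := by
  refine ⟨Polynomial.C am1 + Polynomial.C a0 * Polynomial.X + Polynomial.C a1 * Polynomial.X ^ 2,
    by compute_degree, ?_⟩
  simp only [Ptri, map_add, map_mul, Polynomial.toLaurent_C, Polynomial.toLaurent_X, map_pow,
    T_pow, add_mul, mul_T_assoc]
  norm_num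

section Lucas

open Polynomial

variable {p : ℕ} [Fact p.Prime] {f : (ZMod p)[X]}

theorem coeff_pow_self_mul_add (hf : f.natDegree ≤ 2) (m : ℕ) {r : ℕ} (hr : r < p) :
    (f ^ (p * m + r)).coeff (p * m + r) = (f ^ m).coeff m * (f ^ r).coeff r := by
  have hp : 0 < p := (Fact.out : p.Prime).pos
  rw [pow_add, pow_mul, ← ZMod.expand_card, ← map_pow, coeff_mul,
    Finset.sum_eq_single (p * m, r) _ (by simp), coeff_expand_mul' hp]
  rintro ⟨i, j⟩ hij hne
  rw [Finset.HasAntidiagonal.mem_antidiagonal] at hij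
  dsimp only at hij ⊢
  by_cases hpi : p ∣ i
  · obtain ⟨i, rfl⟩ := hpi
    -- `f ^ r` has degree at most `2 r`, so the only surviving index is `j = r`
    suffices (f ^ r).natDegree < j by rw [coeff_eq_zero_of_natDegree_lt this, mul_zero]
    refine natDegree_pow_le.trans_lt ?_
    by_contra! hj
    have hj : j ≤ 2 * r := hj.trans (by nlinarith)
    have him : i = m := by
      have h1 : p * i < p * (m + 1) := by rw [mul_add]; omega
      have h2 : p * m < p * (i + 1) := by rw [mul_add]; omega
      have := Nat.lt_of_mul_lt_mul_left h1
      have := Nat.lt_of_mul_lt_mul_left h2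
      omega
    subst him
    exact hne (by rw [show j = r by omega])
  · rw [coeff_expand hp, if_neg hpi, zero_mul]

theorem coeff_pow_self_eq_mul_div_mod (hf : f.natDegree ≤ 2) (n : ℕ) :
    (f ^ n).coeff n = (f ^ (n / p)).coeff (n / p) * (f ^ (n % p)).coeff (n % p) := by
  conv_lhs => rw [← Nat.div_add_mod n p]
  exact coeff_pow_self_mul_add hf _ (Nat.mod_lt _ (Fact.out : p.Prime).pos)

theorem coeff_pow_self_eq_zero_of_digit (hf : f.natDegree ≤ 2) {d : ℕ}
    (hd : (f ^ d).coeff d = 0) (k : ℕ) {n : ℕ} (hn : n / p ^ k % p = d) :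
    (f ^ n).coeff n = 0 := by
  induction k generalizing n with
  | zero =>
    rw [pow_zero, Nat.div_one] at hn
    rw [coeff_pow_self_eq_mul_div_mod hf, hn, hd, mul_zero]
  | succ k ih =>
    rw [coeff_pow_self_eq_mul_div_mod hf, ih (by rwa [Nat.div_div_eq_div_mul, ← pow_succ']),
      zero_mul]

theorem exists_lt_coeff_pow_self_eq_zero (hf : f.natDegree ≤ 2) {n : ℕ}
    (hn : (f ^ n).coeff n = 0) : ∃ d < p, (f ^ d).coeff d = 0 := by
  have hp := (Fact.out : p.Prime).one_lt
  induction n using Nat.strong_induction_on with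
  | _ n ih =>
    obtain hnp | hpn := lt_or_ge n p
    · exact ⟨n, hnp, hn⟩
    rw [coeff_pow_self_eq_mul_div_mod hf] at hn
    obtain h | h := mul_eq_zero.mp hn
    · exact ih _ (Nat.div_lt_self (by omega) hp) h
    · exact ⟨_, Nat.mod_lt _ (by omega), h⟩

end Lucas

open Finset Filter Topology

theorem Nat.mod_pow_div_pow_mod {b j L : ℕ} (hj : j < L) (m : ℕ) :
    m % b ^ L / b ^ j % b = m / b ^ j % b := by
  rw [← Nat.sub_add_cancel hj.le, pow_add, mul_comm, Nat.mod_mul_right_div_self,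
    Nat.mod_mod_of_dvd _ (dvd_pow_self b (by omega))]

theorem Nat.div_pow_succ_add_mod_eq {p k n i d : ℕ} (hp : 1 < p) (hd : d < p)
    (hn : n / p ^ k % p ^ 2 = d * p) (hi : i < p ^ k) : (n + i) / p ^ (k + 1) % p = d := by
  -- adding `i < p ^ k` carries at most `1` into digit `k`, which is `0`, so digit `k + 1` survives
  have hq : 0 < p ^ k := by positivity
  have hr := Nat.mod_lt n hq
  set e := (n % p ^ k + i) / p ^ k with he_def
  have hcarry : (n + i) / p ^ k = n / p ^ k + e := by
    have := Nat.div_add_mod n (p ^ k)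
    rw [show n + i = (n % p ^ k + i) + p ^ k * (n / p ^ k) by omega, Nat.add_mul_div_left _ _ hq,
      add_comm]
  have he : e ≤ 1 := by
    rw [he_def, Nat.div_le_iff_le_mul_add_pred hq]
    omega
  have hlt : d * p + e < p ^ 2 := by nlinarith
  rw [pow_succ, ← Nat.div_div_eq_div_mul, hcarry, ← Nat.mod_mul_right_div_self, Nat.add_mod, ← sq,
    hn, Nat.mod_eq_of_lt (he.trans_lt (by nlinarith)), Nat.mod_eq_of_lt hlt, mul_comm,
    Nat.mul_add_div (by omega), Nat.div_eq_of_lt (by omega), add_zero]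

theorem card_le_card_mul_card_of_div_mod {s A B : Finset ℕ} {Q : ℕ}
    (h : ∀ n ∈ s, n / Q ∈ A ∧ n % Q ∈ B) : #s ≤ #A * #B := by
  rw [← card_product]
  refine card_le_card_of_injOn (fun n => (n / Q, n % Q)) (fun n hn => mem_product.2 (h n hn)) ?_
  intro a _ b _ hab
  simp only [Prod.mk.injEq] at hab
  rw [← Nat.div_add_mod a Q, ← Nat.div_add_mod b Q, hab.1, hab.2]

theorem card_filter_digits_ne_le {b e : ℕ} (he : e < b) (L : ℕ) :
    #{m ∈ range (b ^ L) | ∀ j < L, m / b ^ j % b ≠ e} ≤ (b - 1) ^ L := by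
  induction L with
  | zero => simp
  | succ L ih =>
    calc _ ≤ #{m ∈ range (b ^ L) | ∀ j < L, m / b ^ j % b ≠ e} * #((range b).erase e) :=
          card_le_card_mul_card_of_div_mod (Q := b) fun m hm => ?_
      _ ≤ (b - 1) ^ L * (b - 1) := by
          rw [card_erase_of_mem (mem_range.2 he), card_range]
          gcongr
      _ = (b - 1) ^ (L + 1) := (pow_succ ..).symm
    simp only [mem_filter, mem_range, mem_erase] at hm ⊢
    obtain ⟨hmb, hdig⟩ := hm
    refine ⟨⟨Nat.div_lt_of_lt_mul (by rwa [← pow_succ']), fun j hj => ?_⟩,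
      by simpa using hdig 0 (Nat.succ_pos L), Nat.mod_lt _ (by omega)⟩
    rw [Nat.div_div_eq_div_mul, ← pow_succ']
    exact hdig (j + 1) (by omega)

theorem tendsto_card_filter_range_div_nhds_one {S : ℕ → Prop} [DecidablePred S]
    (h : ∀ ε > 0, ∃ Q > 0, ∃ B : Finset ℕ, (∀ n, ¬ S n → n % Q ∈ B) ∧ (#B : ℝ) ≤ ε * Q) :
    Tendsto (fun N : ℕ => (#{n ∈ range N | S n} : ℝ) / N) atTop (𝓝 1) := by
  rw [Metric.tendsto_atTop]
  intro ε hε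
  obtain ⟨Q, hQ, B, hSB, hB⟩ := h (ε / 4) (by positivity)
  refine ⟨Q, fun N hN => ?_⟩
  have hN0 : (0 : ℝ) < N := by exact_mod_cast hQ.trans_le hN
  have hbad : #{n ∈ range N | ¬ S n} ≤ #(range (N / Q + 1)) * #B :=
    card_le_card_mul_card_of_div_mod fun n hn => by
      rw [mem_filter, mem_range] at hn
      exact ⟨mem_range.2 (Nat.lt_succ_of_le (Nat.div_le_div_right hn.1.le)), hSB n hn.2⟩
  have hperiods : (N / Q + 1) * Q ≤ 2 * N := by
    have := Nat.div_mul_le_self N Q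
    rw [add_mul]
    omega
  have hsplit := card_filter_add_card_filter_not (s := range N) S
  rw [card_range] at hsplit hbad
  have hbadR : (#{n ∈ range N | ¬ S n} : ℝ) ≤ ε / 2 * N := by
    calc (#{n ∈ range N | ¬ S n} : ℝ) ≤ ((N / Q + 1 : ℕ) : ℝ) * #B := by exact_mod_cast hbad
      _ ≤ ((N / Q + 1 : ℕ) : ℝ) * (ε / 4 * Q) := by gcongr
      _ = ε / 4 * (((N / Q + 1) * Q : ℕ) : ℝ) := by push_cast; ring
      _ ≤ ε / 4 * ((2 * N : ℕ) : ℝ) := by gcongr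
      _ = ε / 2 * N := by push_cast; ring
  have hgood : (#{n ∈ range N | S n} : ℝ) = N - #{n ∈ range N | ¬ S n} := by
    rw [eq_sub_iff_add_eq]
    exact_mod_cast hsplit
  rw [Real.dist_eq, hgood, sub_div, div_self hN0.ne', sub_sub_cancel_left, abs_neg,
    abs_of_nonneg (by positivity), div_lt_iff₀ hN0]
  nlinarith

theorem tendsto_density_one_of_digit_block {S : ℕ → Prop} [DecidablePred S] {p d h : ℕ}
    (hp : 1 < p) (hd : d < p) (hS : ∀ n k, h ≤ k → n / p ^ k % p ^ 2 = d * p → S n) :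
    Tendsto (fun N : ℕ => (#{n ∈ range N | S n} : ℝ) / N) atTop (𝓝 1) := by
  refine tendsto_card_filter_range_div_nhds_one fun ε hε => ?_
  set b := p ^ 2 with hb_def
  have hb : 0 < (b : ℝ) := by positivity
  have hdb : d * p < b := by nlinarith
  have hratio : ((b - 1 : ℕ) : ℝ) / b < 1 := by
    rw [div_lt_one hb]
    exact_mod_cast Nat.sub_lt (by omega) one_pos
  obtain ⟨L, hL⟩ := exists_pow_lt_of_lt_one hε hratio
  refine ⟨p ^ h * b ^ L, by positivity,
    {m ∈ range (p ^ h * b ^ L) | ∀ j < L, m / p ^ h / b ^ j % b ≠ d * p}, fun n hn => ?_, ?_⟩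
  · rw [mem_filter, mem_range]
    refine ⟨Nat.mod_lt _ (by positivity), fun j hj hblock => hn (hS n (h + 2 * j) (by omega) ?_)⟩
    rwa [Nat.mod_mul_right_div_self, Nat.mod_pow_div_pow_mod hj, Nat.div_div_eq_div_mul, hb_def,
      ← pow_mul, ← pow_add] at hblock
  · have hcard : #{m ∈ range (p ^ h * b ^ L) | ∀ j < L, m / p ^ h / b ^ j % b ≠ d * p} ≤
        (b - 1) ^ L * p ^ h := by
      refine (card_le_card_mul_card_of_div_mod (Q := p ^ h)
        (A := {m ∈ range (b ^ L) | ∀ j < L, m / b ^ j % b ≠ d * p}) (B := range (p ^ h))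
        fun m hm => ?_).trans (by rw [card_range]; gcongr; exact card_filter_digits_ne_le hdb L)
      rw [mem_filter, mem_range] at hm
      exact ⟨mem_filter.2 ⟨mem_range.2 (Nat.div_lt_of_lt_mul hm.1), hm.2⟩,
        mem_range.2 (Nat.mod_lt _ (by positivity))⟩
    calc _ ≤ (((b - 1) ^ L * p ^ h : ℕ) : ℝ) := by exact_mod_cast hcard
      _ = (((b - 1 : ℕ) : ℝ) / b) ^ L * (p ^ h * b ^ L : ℕ) := by
          rw [div_pow]
          field_simp
          push_cast
          ring
      _ ≤ ε * (p ^ h * b ^ L : ℕ) := by gcongr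

theorem stmt_14 (am1 a0 a1 : ℤ) (p : ℕ) (hp : p.Prime)
    (hdvd : ∃ n : ℕ, (p : ℤ) ∣ ct ((Ptri am1 a0 a1) ^ n)) (h : ℕ) (c : ℕ → ℤ) :
    Filter.Tendsto
      (fun N : ℕ =>
        (((Finset.range N).filter fun n =>
            (p : ℤ) ∣ ∑ i ∈ Finset.range (h + 1), c i * ct ((Ptri am1 a0 a1) ^ (n + i))).card : ℝ)
          / N)
      Filter.atTop (nhds 1) := by
  have : Fact p.Prime := ⟨hp⟩
  obtain ⟨g, hg, hP⟩ := exists_Ptri_eq_toLaurent_mul_T am1 a0 a1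
  set f := g.map (Int.castRingHom (ZMod p))
  have hf : f.natDegree ≤ 2 := Polynomial.natDegree_map_le.trans hg
  have hdvd_iff : ∀ n, (p : ℤ) ∣ ct (Ptri am1 a0 a1 ^ n) ↔ (f ^ n).coeff n = 0 := fun n => by
    rw [ct, hP, coeff_zero_toLaurent_mul_T_neg_one_pow, ← Polynomial.map_pow,
      Polynomial.coeff_map, eq_intCast, ZMod.intCast_zmod_eq_zero_iff_dvd]
  obtain ⟨n₀, hn₀⟩ := hdvd
  obtain ⟨d, hdp, hd⟩ := exists_lt_coeff_pow_self_eq_zero hf ((hdvd_iff n₀).1 hn₀)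
  refine tendsto_density_one_of_digit_block (h := h) hp.one_lt hdp fun n k hk hblock => ?_
  refine Finset.dvd_sum fun i hi => Dvd.dvd.mul_left ((hdvd_iff _).2 ?_) _
  have hik : i < p ^ k := (Finset.mem_range.1 hi).trans_le ((Nat.lt_pow_self hp.one_lt).trans_le
    (Nat.pow_le_pow_right hp.pos hk))
  exact coeff_pow_self_eq_zero_of_digit hf hd (k + 1)
    (Nat.div_pow_succ_add_mod_eq hp.one_lt hdp hblock hik)
end

section
/- Let P(x) = a₋₁x⁻¹ + a₀ + a₁x with integer coefficients, a_n = ct[P(x)^n], and p a prime not dividing a_n for any n. Then for every n there exists n' with n < n' and n' − n < p^{p^{p−1} + p + 1} such that a_n ≡ a_{n'} (mod p). -/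
/-!
Reduce modulo `p`. With `f(x) = x P(x) = a₋₁ + a₀ x + a₁ x²`, the constant term of `P^n` is the
coefficient of `x^n` in `f^n`. Since `f^p = f(x^p)` over `𝔽_p` and `deg f ≤ 2`, the sequence
`A n := [x^n] f^n mod p` satisfies the Lucas-type rule `A (p q + r) = A q · A r` for `r < p`, so
`A` is the product of its values at the base-`p` digits. These values are units of `𝔽_p`, hence
have order dividing `p - 1`, and every product of digit values is already the value of some
`c < p^(p(p-2))`, namely a number in which each digit occurs fewer than `p - 1` times. Taking
`m = ⌊n / p^(p(p-2))⌋ + 1` and `c` with `A c = A n · A m^(p-2)`, the number `n' = p^(p(p-2)) m + c`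
satisfies `A n' = A m^(p-1) A n = A n` and `n < n' < n + 2 p^(p(p-2))`.
-/

open LaurentPolynomial

open Polynomial in
lemma LaurentPolynomial.coeff_toLaurent_mul_T_neg {R : Type*} [Semiring R] (f : R[X]) (n : ℕ) :
    (f.toLaurent * T (-n)).coeff 0 = f.coeff n := by
  rw [T, AddMonoidAlgebra.coeff_mul_single_apply]
  simp only [toLaurent_apply, AddMonoidAlgebra.coeff_mapDomain, neg_neg, zero_add,
    Finsupp.mapDomain_apply Nat.cast_injective, mul_one]
  rfl

noncomputable def trinomialPoly (am1 a0 a1 : ℤ) : Polynomial ℤ :=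
  .C am1 + .C a0 * .X + .C a1 * .X ^ 2

lemma Ptri_eq_toLaurent_mul_T (am1 a0 a1 : ℤ) :
    Ptri am1 a0 a1 = (trinomialPoly am1 a0 a1).toLaurent * T (-1) := by
  simp only [Ptri, trinomialPoly, map_add, map_mul, Polynomial.toLaurent_C,
    Polynomial.toLaurent_X, Polynomial.toLaurent_X_pow, add_mul, mul_assoc]
  rw [← T_add, ← T_add]
  norm_num

lemma ct_Ptri_pow (am1 a0 a1 : ℤ) (n : ℕ) :
    ct (Ptri am1 a0 a1 ^ n) = (trinomialPoly am1 a0 a1 ^ n).coeff n := by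
  rw [ct, Ptri_eq_toLaurent_mul_T, mul_pow, T_pow, ← map_pow, mul_neg_one]
  exact coeff_toLaurent_mul_T_neg _ n

open Polynomial in
theorem Polynomial.coeff_pow_mul_add_self {p : ℕ} [Fact p.Prime] {g : (ZMod p)[X]}
    (hg : g.natDegree ≤ 2) (q : ℕ) {r : ℕ} (hr : r < p) :
    (g ^ (p * q + r)).coeff (p * q + r) = (g ^ q).coeff q * (g ^ r).coeff r := by
  have hp : 0 < p := (Fact.out : p.Prime).pos
  have hfrob : g ^ (p * q + r) = expand (ZMod p) p (g ^ q) * g ^ r := by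
    rw [pow_add, pow_mul, ← ZMod.expand_card, ← map_pow]
  rw [hfrob, coeff_mul, Finset.sum_eq_single (p * q, r)]
  · rw [mul_comm p q, coeff_expand_mul hp]
  · rintro ⟨i, j⟩ hij hne
    rw [Finset.HasAntidiagonal.mem_antidiagonal] at hij
    rw [coeff_expand hp]
    split_ifs with hdvd
    · obtain ⟨k, rfl⟩ := hdvd
      suffices hj : (g ^ r).natDegree < j by rw [coeff_eq_zero_of_natDegree_lt hj, mul_zero]
      have hdeg : (g ^ r).natDegree ≤ 2 * r :=
        natDegree_pow_le.trans (by rw [mul_comm 2]; exact Nat.mul_le_mul_left r hg)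
      by_contra! hj
      -- `j ≤ 2 * r < p + r` pins `p * k` to `p * q`
      have hkq : k = q := by
        have h1 : p * k < p * (q + 1) := by rw [mul_add]; omega
        have h2 : p * q < p * (k + 1) := by rw [mul_add]; omega
        have := Nat.lt_of_mul_lt_mul_left h1
        have := Nat.lt_of_mul_lt_mul_left h2
        omega
      subst hkq
      exact hne (Prod.ext rfl (by simp only at hij ⊢; omega))
    · rw [zero_mul]
  · simp

lemma image_Iio_pow_mono {M : Type*} {A : ℕ → M} {b : ℕ} (hb : 0 < b) {k j : ℕ}
    (hkj : k ≤ j) :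
    A '' Set.Iio (b ^ k) ⊆ A '' Set.Iio (b ^ j) :=
  Set.image_mono (Set.Iio_subset_Iio (Nat.pow_le_pow_right hb hkj))

section DigitMultiplicative

variable {M : Type*} [CommMonoid M] {b : ℕ} {A : ℕ → M}

lemma apply_pow_mul_add (h0 : A 0 = 1) (hmul : ∀ q r, r < b → A (b * q + r) = A q * A r)
    (k : ℕ) {q r : ℕ} (hr : r < b ^ k) : A (b ^ k * q + r) = A q * A r := by
  induction k generalizing r with
  | zero => simp_all
  | succ k ih =>
    have hb : 0 < b := Nat.pos_of_ne_zero (by rintro rfl; simp at hr)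
    have hdiv : r / b < b ^ k := Nat.div_lt_of_lt_mul (by rwa [← pow_succ'])
    calc A (b ^ (k + 1) * q + r) = A (b * (b ^ k * q + r / b) + r % b) := by
          congr 1; conv_lhs => rw [← Nat.div_add_mod r b]
          ring
      _ = A q * A (b * (r / b) + r % b) := by
          rw [hmul _ _ (Nat.mod_lt r hb), ih hdiv, hmul _ _ (Nat.mod_lt r hb), mul_assoc]
      _ = A q * A r := by rw [Nat.div_add_mod]

lemma mul_mem_image_Iio_pow (h0 : A 0 = 1) (hmul : ∀ q r, r < b → A (b * q + r) = A q * A r)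
    {k j : ℕ} {x y : M} (hx : x ∈ A '' Set.Iio (b ^ k)) (hy : y ∈ A '' Set.Iio (b ^ j)) :
    x * y ∈ A '' Set.Iio (b ^ (k + j)) := by
  obtain ⟨c, hc, rfl⟩ := hx
  obtain ⟨d, hd, rfl⟩ := hy
  refine ⟨b ^ k * d + c, ?_, by rw [apply_pow_mul_add h0 hmul k hc, mul_comm]⟩
  simp only [Set.mem_Iio] at hc hd ⊢
  calc b ^ k * d + c < b ^ k * d + b ^ k := by omega
    _ = b ^ k * (d + 1) := by ring
    _ ≤ b ^ k * b ^ j := Nat.mul_le_mul_left _ hd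
    _ = b ^ (k + j) := (pow_add b k j).symm

lemma mem_closure_image_Iio (hb : 1 < b) (h0 : A 0 = 1)
    (hmul : ∀ q r, r < b → A (b * q + r) = A q * A r) (n : ℕ) :
    A n ∈ Submonoid.closure (A '' Set.Iio b) := by
  induction n using Nat.strong_induction_on with
  | _ n ih =>
    rcases Nat.eq_zero_or_pos n with rfl | hn
    · exact h0 ▸ Submonoid.one_mem _
    rw [← Nat.div_add_mod n b, hmul _ _ (Nat.mod_lt n (by omega))]
    exact Submonoid.mul_mem _ (ih _ (Nat.div_lt_self hn hb))
      (Submonoid.subset_closure ⟨_, Nat.mod_lt n (by omega), rfl⟩)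

lemma pow_mem_image_Iio_pow (h0 : A 0 = 1) (hmul : ∀ q r, r < b → A (b * q + r) = A q * A r)
    {x : M} (hx : x ∈ A '' Set.Iio b) (e : ℕ) : x ^ e ∈ A '' Set.Iio (b ^ e) := by
  induction e with
  | zero => exact ⟨0, by simp, h0.trans (pow_zero x).symm⟩
  | succ e ih => exact pow_succ x e ▸ mul_mem_image_Iio_pow h0 hmul ih (by rwa [pow_one])

lemma prod_mem_image_Iio_pow (h0 : A 0 = 1) (hmul : ∀ q r, r < b → A (b * q + r) = A q * A r)
    {ι : Type*} (t : Finset ι) {f : ι → M} {k : ℕ}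
    (hf : ∀ i ∈ t, f i ∈ A '' Set.Iio (b ^ k)) :
    ∏ i ∈ t, f i ∈ A '' Set.Iio (b ^ (t.card * k)) := by
  induction t using Finset.cons_induction with
  | empty => exact ⟨0, by simp, h0⟩
  | cons i t hi ih =>
    rw [Finset.prod_cons, Finset.card_cons, add_mul, one_mul, add_comm]
    exact mul_mem_image_Iio_pow h0 hmul (hf i (Finset.mem_cons_self i t))
      (ih fun j hj => hf j (Finset.mem_cons_of_mem hj))

lemma closure_image_Iio_subset (hb : 1 < b) (h0 : A 0 = 1)
    (hmul : ∀ q r, r < b → A (b * q + r) = A q * A r) {N : ℕ} (hN : 0 < N)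
    (hpow : ∀ d < b, A d ^ N = 1) :
    (Submonoid.closure (A '' Set.Iio b) : Set M) ⊆ A '' Set.Iio (b ^ (b * (N - 1))) := by
  classical
  intro x hx
  set s := (Finset.range b).image A
  have hs : A '' Set.Iio b = s := by rw [Finset.coe_image, Finset.coe_range]
  rw [hs, SetLike.mem_coe, Submonoid.mem_closure_finset'] at hx
  obtain ⟨e, rfl⟩ := hx
  have hdigit : ∀ y ∈ s, y ^ N = 1 ∧ y ∈ A '' Set.Iio b := by
    intro y hy
    obtain ⟨d, hd, rfl⟩ := Finset.mem_image.mp hy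
    exact ⟨hpow d (Finset.mem_range.mp hd), d, Finset.mem_range.mp hd, rfl⟩
  have hcard : (Finset.univ : Finset s).card * (N - 1) ≤ b * (N - 1) := by
    rw [Finset.card_univ, Fintype.card_coe]
    exact Nat.mul_le_mul_right _ (Finset.card_image_le.trans (Finset.card_range b).le)
  refine image_Iio_pow_mono (by omega) hcard (prod_mem_image_Iio_pow h0 hmul _ fun i _ => ?_)
  rw [pow_eq_pow_mod _ (hdigit i.1 i.2).1]
  exact image_Iio_pow_mono (by omega) (Nat.le_sub_one_of_lt (Nat.mod_lt _ hN))
    (pow_mem_image_Iio_pow h0 hmul (hdigit i.1 i.2).2 _)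

theorem exists_gt_apply_eq (hb : 1 < b) (h0 : A 0 = 1)
    (hmul : ∀ q r, r < b → A (b * q + r) = A q * A r) {N : ℕ} (hN : 0 < N)
    (hpow : ∀ n, A n ^ N = 1) (n : ℕ) :
    ∃ n', n < n' ∧ n' < n + b ^ (b * (N - 1) + 1) ∧ A n' = A n := by
  set B := b ^ (b * (N - 1))
  set m := n / B + 1
  obtain ⟨c, hc, hAc⟩ : A n * A m ^ (N - 1) ∈ A '' Set.Iio B :=
    closure_image_Iio_subset hb h0 hmul hN (fun d _ => hpow d) <| Submonoid.mul_mem _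
      (mem_closure_image_Iio hb h0 hmul n)
      (Submonoid.pow_mem _ (mem_closure_image_Iio hb h0 hmul m) _)
  have hB : 0 < B := Nat.pow_pos (by omega)
  have hn : n < B * m := Nat.lt_mul_div_succ n hB
  have hm : B * m ≤ n + B := by
    have := Nat.mul_div_le n B
    rw [Nat.mul_succ]; omega
  have h2B : 2 * B ≤ b ^ (b * (N - 1) + 1) := by
    rw [pow_succ, mul_comm]; exact Nat.mul_le_mul_left _ hb
  refine ⟨B * m + c, by omega, by simp only [Set.mem_Iio] at hc; omega, ?_⟩
  rw [apply_pow_mul_add h0 hmul _ hc, hAc, mul_left_comm, ← pow_succ', Nat.sub_add_cancel hN,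
    hpow, mul_one]

end DigitMultiplicative

lemma Nat.mul_sub_two_le_pow_sub_one (n : ℕ) : n * (n - 2) ≤ n ^ (n - 1) := by
  rcases lt_or_ge n 2 with hn | hn
  · interval_cases n <;> simp
  calc n * (n - 2) ≤ n * n ^ (n - 2) := Nat.mul_le_mul_left _ (Nat.lt_pow_self hn).le
    _ = n ^ (n - 1) := by rw [← pow_succ']; congr 1; omega

theorem stmt_15 (am1 a0 a1 : ℤ) (p : ℕ) (hp : p.Prime)
    (hndvd : ∀ n : ℕ, ¬ (p : ℤ) ∣ ct ((Ptri am1 a0 a1) ^ n)) (n : ℕ) :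
    ∃ n' : ℕ, n < n' ∧ n' - n < p ^ (p ^ (p - 1) + p + 1) ∧
      ct ((Ptri am1 a0 a1) ^ n) ≡ ct ((Ptri am1 a0 a1) ^ n') [ZMOD (p : ℤ)] := by
  have : Fact p.Prime := ⟨hp⟩
  set g := (trinomialPoly am1 a0 a1).map (Int.castRingHom (ZMod p)) with hg_def
  have hct : ∀ m, ((ct (Ptri am1 a0 a1 ^ m) : ℤ) : ZMod p) = (g ^ m).coeff m := fun m => by
    rw [ct_Ptri_pow, hg_def, ← Polynomial.map_pow, Polynomial.coeff_map, eq_intCast]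
  have hg : g.natDegree ≤ 2 :=
    Polynomial.natDegree_map_le.trans (by unfold trinomialPoly; compute_degree)
  have hpow : ∀ m, ((g ^ m).coeff m) ^ (p - 1) = 1 := fun m => by
    refine ZMod.pow_card_sub_one_eq_one fun h => hndvd m ?_
    rwa [← ZMod.intCast_zmod_eq_zero_iff_dvd, hct]
  obtain ⟨n', hnn', hlt, heq⟩ := exists_gt_apply_eq (A := fun m => (g ^ m).coeff m) hp.one_lt
    (by simp) (fun q r hr => Polynomial.coeff_pow_mul_add_self hg q hr)
    (by have := hp.two_le; omega) hpow n
  refine ⟨n', hnn', ?_, by rw [← ZMod.intCast_eq_intCast_iff, hct, hct]; exact heq.symm⟩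
  rw [Nat.sub_sub, one_add_one_eq_two] at hlt
  calc n' - n < p ^ (p * (p - 2) + 1) := by omega
    _ ≤ p ^ (p ^ (p - 1) + p + 1) := Nat.pow_le_pow_right hp.pos
        (by have := Nat.mul_sub_two_le_pow_sub_one p; omega)
end

section
/- The sequence (M_n mod 2) of Motzkin numbers modulo 2 is uniformly recurrent: for every finite word w occurring in the sequence, there is a constant C_w such that every occurrence of w is followed by another occurrence within distance C_w. -/
open LaurentPolynomial

/-- The Motzkin numbers reduced mod 2. -/
noncomputable def motzkinMod2 (n : ℕ) : ZMod 2 := (ct ((T (-1) + 1 + T 1) ^ n * (1 - T 2)) : ZMod 2)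

namespace MotzkinAux

open Polynomial

/-- parity of the number of trailing ones in binary. -/
def Fb : ℕ → ZMod 2
  | 0 => 0
  | (n+1) => if (n+1) % 2 = 0 then 0 else 1 + Fb ((n+1)/2)
  decreasing_by exact Nat.div_lt_self (Nat.succ_pos n) one_lt_two

lemma Fb_two_mul (r : ℕ) : Fb (2*r) = 0 := by
  cases r with
  | zero => rw [Nat.mul_zero]; simp [Fb]
  | succ k =>
    rw [show 2*(k+1) = (2*k+1)+1 by ring, Fb]
    simp [Nat.mul_add_mod]
    omega

lemma Fb_two_mul_add_one (r : ℕ) : Fb (2*r+1) = 1 + Fb r := by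
  rw [show 2*r+1 = (2*r)+1 by rfl, Fb]
  have h1 : (2*r+1) % 2 = 1 := by omega
  have h2 : (2*r+1) / 2 = r := by omega
  rw [h1, h2]
  norm_num

lemma Fb_shift : ∀ N : ℕ, ∀ m c : ℕ, ¬ (2^N ∣ (m+1)) → Fb (m + c * 2^N) = Fb m := by
  intro N
  induction N with
  | zero => intro m c h; exact absurd (one_dvd _) h
  | succ N ih =>
    intro m c h
    rcases Nat.even_or_odd m with ⟨r, hr⟩ | ⟨r, hr⟩
    · have h1 : m + c * 2^(N+1) = 2 * (r + c * 2^N) := by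
        rw [hr]; ring
      rw [h1, Fb_two_mul, show m = 2*r by omega, Fb_two_mul]
    · have h1 : m + c * 2^(N+1) = 2 * (r + c * 2^N) + 1 := by
        rw [hr]; ring
      rw [h1, Fb_two_mul_add_one, show m = 2*r+1 by omega, Fb_two_mul_add_one]
      congr 1
      apply ih
      intro hdvd
      apply h
      rw [show m + 1 = 2 * (r + 1) by omega, pow_succ, mul_comm (2^N) 2]
      exact mul_dvd_mul_left 2 hdvd

lemma Fb_pow_mul_sub_one : ∀ N y : ℕ, Fb (2^N * (y+1) - 1) = (N : ZMod 2) + Fb y := by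
  intro N
  induction N with
  | zero => intro y; simp
  | succ N ih =>
    intro y
    have hpos : 1 ≤ 2^N * (y+1) := Nat.one_le_iff_ne_zero.mpr (by positivity)
    have h1 : 2^(N+1) * (y+1) - 1 = 2 * (2^N * (y+1) - 1) + 1 := by
      rw [pow_succ]
      have : 2^N * 2 * (y+1) = 2 * (2^N * (y+1)) := by ring
      omega
    rw [h1, Fb_two_mul_add_one, ih]
    push_cast
    ring

lemma Fb_return (z : ℕ) : ∃ d : ℕ, 0 < d ∧ d ≤ 4 ∧ Fb (z + d) = Fb z := by
  have h4 : ∀ u, Fb (4*u+3) = Fb u := by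
    intro u
    rw [show 4*u+3 = 2*(2*u+1)+1 by ring, Fb_two_mul_add_one, Fb_two_mul_add_one,
      ← add_assoc, show (1:ZMod 2)+1 = 0 by decide, zero_add]
  have h1 : ∀ u, Fb (4*u+1) = 1 := by
    intro u
    rw [show 4*u+1 = 2*(2*u)+1 by ring, Fb_two_mul_add_one, Fb_two_mul, add_zero]
  have hr : z % 4 < 4 := Nat.mod_lt _ (by norm_num)
  have hz : z = 4*(z/4) + z % 4 := by omega
  set u := z / 4 with hu
  interval_cases h : z % 4
  · exact ⟨2, by norm_num, by norm_num, by
      rw [show z + 2 = 2*(2*u+1) by omega, show z = 2*(2*u) by omega, Fb_two_mul, Fb_two_mul]⟩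
  · exact ⟨4, by norm_num, by norm_num, by
      rw [show z + 4 = 4*(u+1)+1 by omega, show z = 4*u+1 by omega, h1, h1]⟩
  · exact ⟨2, by norm_num, by norm_num, by
      rw [show z + 2 = 2*(2*(u+1)) by omega, show z = 2*(2*u+1) by omega, Fb_two_mul, Fb_two_mul]⟩
  · by_cases h0 : Fb z = 0
    · exact ⟨1, by norm_num, by norm_num, by
        rw [show z + 1 = 2*(2*(u+1)) by omega, Fb_two_mul, h0]⟩
    · have h0' : Fb z = 1 := by
        revert h0; generalize Fb z = x; revert x; decide
      exact ⟨2, by norm_num, by norm_num, by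
        rw [show z + 2 = 4*(u+1)+1 by omega, h1, h0']⟩

lemma dvd_close (N a b : ℕ) (ha : 2^N ∣ a) (hb : 2^N ∣ b)
    (h1 : a < b + 2^N) (h2 : b < a + 2^N) : a = b := by
  obtain ⟨x, hx⟩ := ha
  obtain ⟨y, hy⟩ := hb
  subst hx; subst hy
  have hx' : x < y + 1 := by
    apply Nat.lt_of_mul_lt_mul_left (a := 2^N)
    rw [Nat.mul_add, Nat.mul_one]
    exact h1
  have hy' : y < x + 1 := by
    apply Nat.lt_of_mul_lt_mul_left (a := 2^N)
    rw [Nat.mul_add, Nat.mul_one]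
    exact h2
  have : x = y := by omega
  rw [this]

/-! ## Polynomial computations over `ZMod 2` -/

lemma sq_eq_expand (f : (ZMod 2)[X]) : f ^ 2 = expand (ZMod 2) 2 f := by
  conv_lhs => rw [← Polynomial.map_frobenius_expand 2 f]
  rw [show (frobenius (ZMod 2) 2) = RingHom.id _ from RingHom.ext (by decide), Polynomial.map_id]

noncomputable def W : (ZMod 2)[X] := 1 + X + X^2

lemma coeff_W_mul (g : (ZMod 2)[X]) (j : ℕ) :
    (W * g).coeff j = g.coeff j + (if 1 ≤ j then g.coeff (j-1) else 0)
      + (if 2 ≤ j then g.coeff (j-2) else 0) := by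
  have h1 : (g * X).coeff j = if 1 ≤ j then g.coeff (j-1) else 0 := by
    rw [← pow_one X, Polynomial.coeff_mul_X_pow']
  rw [W, add_mul, add_mul, one_mul, Polynomial.coeff_add, Polynomial.coeff_add,
    mul_comm X g, mul_comm (X^2) g, h1, Polynomial.coeff_mul_X_pow']

lemma pow_two_mul (m : ℕ) : W ^ (2*m) = expand (ZMod 2) 2 (W ^ m) := by
  rw [mul_comm, pow_mul, sq_eq_expand]

lemma pow_two_mul_add_one (m : ℕ) : W ^ (2*m+1) = W * expand (ZMod 2) 2 (W ^ m) := by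
  rw [pow_succ, pow_two_mul, mul_comm]

lemma coeff_expand_even (f : (ZMod 2)[X]) (k : ℕ) :
    (expand (ZMod 2) 2 f).coeff (2*k) = f.coeff k := by
  rw [Polynomial.coeff_expand (by norm_num : 0 < 2), if_pos ⟨k, rfl⟩]
  congr 1
  omega

lemma coeff_expand_odd (f : (ZMod 2)[X]) (k : ℕ) (hk : ¬ (2 ∣ k)) :
    (expand (ZMod 2) 2 f).coeff k = 0 := by
  rw [Polynomial.coeff_expand (by norm_num : 0 < 2), if_neg hk]

lemma coeff_E : ∀ n : ℕ, (W ^ n).coeff n = 1 := by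
  intro n
  induction n using Nat.strong_induction_on with
  | _ n ih =>
    rcases Nat.even_or_odd n with ⟨m, hm⟩ | ⟨m, hm⟩
    · rcases Nat.eq_zero_or_pos m with rfl | hm1
      · have : n = 0 := by omega
        subst this; simp [W]
      · have hn : n = 2*m := by omega
        subst hn
        rw [pow_two_mul, coeff_expand_even]
        exact ih m (by omega)
    · have hn : n = 2*m+1 := by omega
      subst hn
      rw [pow_two_mul_add_one, coeff_W_mul]
      have e1 : (expand (ZMod 2) 2 (W^m)).coeff (2*m+1) = 0 :=
        coeff_expand_odd _ _ (by omega)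
      have e2 : (2*m+1) - 1 = 2*m := by omega
      have e3 : (expand (ZMod 2) 2 (W^m)).coeff (2*m) = 1 := by
        rw [coeff_expand_even]; exact ih m (by omega)
      rw [e1, if_pos (by omega : 1 ≤ 2*m+1), e2, e3]
      rcases Nat.eq_zero_or_pos m with rfl | hm1
      · norm_num
      · rw [if_pos (by omega : 2 ≤ 2*m+1),
          coeff_expand_odd _ _ (by omega : ¬ (2 ∣ 2*m+1-2))]
        norm_num

lemma coeff_D : ∀ k : ℕ, (W ^ (k+1)).coeff k = Fb (k+1) := by
  intro k
  induction k using Nat.strong_induction_on with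
  | _ k ih =>
    rcases Nat.even_or_odd k with ⟨r, hr⟩ | ⟨r, hr⟩
    · -- k = 2r, k+1 = 2r+1
      have hk : k = 2*r := by omega
      subst hk
      rw [pow_two_mul_add_one, coeff_W_mul]
      have e1 : (expand (ZMod 2) 2 (W^r)).coeff (2*r) = 1 := by
        rw [coeff_expand_even]; exact coeff_E r
      rw [e1]
      rcases Nat.eq_zero_or_pos r with rfl | hr1
      · norm_num [show Fb 1 = 1 from by rw [show (1:ℕ) = 2*0+1 by rfl, Fb_two_mul_add_one]; simp [Fb]]
      · have e2 : (expand (ZMod 2) 2 (W^r)).coeff (2*r-1) = 0 :=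
          coeff_expand_odd _ _ (by omega)
        have e3 : (expand (ZMod 2) 2 (W^r)).coeff (2*r-2) = Fb r := by
          rw [show 2*r-2 = 2*(r-1) by omega, coeff_expand_even,
            show r = (r-1)+1 by omega]
          exact ih (r-1) (by omega)
        rw [if_pos (by omega : 1 ≤ 2*r), e2, if_pos (by omega : 2 ≤ 2*r), e3,
          show 2*r+1 = 2*r+1 from rfl, Fb_two_mul_add_one]
        ring
    · -- k = 2r+1, k+1 = 2(r+1)
      have hk : k = 2*r+1 := by omega
      subst hk
      rw [show 2*r+1+1 = 2*(r+1) by ring, pow_two_mul,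
        coeff_expand_odd _ _ (by omega : ¬ (2 ∣ 2*r+1)),
        Fb_two_mul]

lemma coeff_A (n : ℕ) : (W ^ n * (1 + X^2)).coeff n = 1 + Fb (n/2) := by
  rw [mul_add, mul_one, Polynomial.coeff_add, coeff_E, mul_comm (W^n) (X^2),
    mul_comm (X^2) (W^n), Polynomial.coeff_mul_X_pow']
  congr 1
  rcases Nat.lt_or_ge n 2 with hn | hn
  · rw [if_neg (by omega)]
    interval_cases n <;> simp [Fb]
  · rw [if_pos hn]
    rcases Nat.even_or_odd n with ⟨m, hm⟩ | ⟨m, hm⟩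
    · have hn2 : n = 2*m := by omega
      subst hn2
      have hm1 : 1 ≤ m := by omega
      rw [pow_two_mul, show 2*m-2 = 2*(m-1) by omega, coeff_expand_even,
        show (W^m) = W^((m-1)+1) by rw [Nat.sub_add_cancel hm1],
        coeff_D (m-1), Nat.sub_add_cancel hm1]
      congr 1
      omega
    · have hn2 : n = 2*m+1 := by omega
      subst hn2
      have hm1 : 1 ≤ m := by omega
      rw [pow_two_mul_add_one, coeff_W_mul]
      have e1 : (expand (ZMod 2) 2 (W^m)).coeff (2*m+1-2) = 0 :=
        coeff_expand_odd _ _ (by omega)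
      have e2 : (expand (ZMod 2) 2 (W^m)).coeff (2*m+1-2-1) = Fb m := by
        rw [show 2*m+1-2-1 = 2*(m-1) by omega, coeff_expand_even,
          show (W^m) = W^((m-1)+1) by rw [Nat.sub_add_cancel hm1],
          coeff_D (m-1), Nat.sub_add_cancel hm1]
      rw [e1, if_pos (by omega : 1 ≤ 2*m+1-2), e2]
      rcases Nat.lt_or_ge m 2 with hm2 | hm2
      · rw [if_neg (by omega)]
        have : (2*m+1)/2 = m := by omega
        rw [this]
        ring
      · rw [if_pos (by omega : 2 ≤ 2*m+1-2),
          coeff_expand_odd _ _ (by omega : ¬ (2 ∣ 2*m+1-2-2))]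
        have : (2*m+1)/2 = m := by omega
        rw [this]
        ring

/-! ## Bridge from the Laurent polynomial definition -/

lemma toLaurent_coeff (p : Polynomial ℤ) (k : ℕ) : (toLaurent p).coeff (k : ℤ) = p.coeff k := by
  rw [LaurentPolynomial.coeff_toLaurent, show ((k:ℤ)) = Nat.castEmbedding k from rfl,
    Finsupp.mapDomain_apply Nat.castEmbedding.injective]
  rfl

lemma laurent_eq (n : ℕ) :
    ((T (-1) + 1 + T 1) ^ n * (1 - T 2) : LaurentPolynomial ℤ).coeff 0
      = (((1+X+X^2)^n * (1 - X^2) : Polynomial ℤ)).coeff n := by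
  have hW : (T (-1) + 1 + T 1 : LaurentPolynomial ℤ) = T (-1) * toLaurent (1+X+X^2) := by
    simp only [map_add, map_one, map_pow, Polynomial.toLaurent_X, mul_add, mul_one, T_pow, ← T_add]
    norm_num [T_zero]
  have h2 : (1 - T 2 : LaurentPolynomial ℤ) = toLaurent (1 - X^2) := by
    simp [map_sub, map_pow, Polynomial.toLaurent_X, T_pow]
  rw [hW, h2, mul_pow, T_pow, mul_assoc, ← map_pow, ← map_mul]
  rw [show ((n:ℤ) * (-1)) = -(n:ℤ) by ring]
  rw [show (T (-(n:ℤ)) : LaurentPolynomial ℤ) = AddMonoidAlgebra.single (-(n:ℤ)) 1 from rfl]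
  rw [AddMonoidAlgebra.coeff_single_mul_apply]
  simp only [one_mul, neg_neg, add_zero]
  exact toLaurent_coeff _ n

lemma motzkin_eq (n : ℕ) : motzkinMod2 n = 1 + Fb (n / 2) := by
  rw [motzkinMod2, ct, laurent_eq]
  have hmap : ((((1+X+X^2)^n * (1 - X^2) : Polynomial ℤ)).coeff n : ZMod 2)
      = (((1+X+X^2)^n * (1 - X^2) : Polynomial ℤ).map (Int.castRingHom (ZMod 2))).coeff n := by
    rw [Polynomial.coeff_map]
    rfl
  rw [hmap]
  have hm : ((1+X+X^2)^n * (1 - X^2) : Polynomial ℤ).map (Int.castRingHom (ZMod 2))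
      = W ^ n * (1 + X^2) := by
    simp only [Polynomial.map_mul, Polynomial.map_pow, Polynomial.map_add,
      Polynomial.map_sub, Polynomial.map_one, Polynomial.map_X]
    rw [W, CharTwo.sub_eq_add]
  rw [hm, coeff_A]

end MotzkinAux

open MotzkinAux in
theorem stmt_18 (ℓ i : ℕ) :
    ∃ C : ℕ, ∀ i' : ℕ, (∀ t < ℓ, motzkinMod2 (i' + t) = motzkinMod2 (i + t)) →
      ∃ j : ℕ, 0 < j ∧ j ≤ C ∧ ∀ t < ℓ, motzkinMod2 (i' + j + t) = motzkinMod2 (i + t) := by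
  set N := ℓ + 2 with hN
  have hP : ℓ + 2 ≤ 2^N := le_of_lt (Nat.lt_two_pow_self (n := ℓ+2))
  have hPpos : 0 < 2^N := by positivity
  refine ⟨8 * 2^N, fun i' hi' => ?_⟩
  by_cases hbad : ∃ t, t < ℓ ∧ 2^N ∣ ((i'+t)/2 + 1)
  · obtain ⟨t₀, ht₀, hdvd⟩ := hbad
    obtain ⟨y, hy⟩ := hdvd
    have hy0 : y ≠ 0 := by rintro rfl; omega
    set z := y - 1 with hz
    have hyz : y = z + 1 := by omega
    obtain ⟨d, hd1, hd4, hdF⟩ := Fb_return z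
    have hdP : 0 < d * 2^N := Nat.mul_pos hd1 hPpos
    have hdP4 : d * 2^N ≤ 4 * 2^N := Nat.mul_le_mul_right _ hd4
    refine ⟨2 * (d * 2^N), by omega, by omega, ?_⟩
    intro t ht
    rw [← hi' t ht, motzkin_eq, motzkin_eq,
      show (i' + 2 * (d * 2^N) + t)/2 = (i'+t)/2 + d * 2^N by omega]
    by_cases hdv : 2^N ∣ ((i'+t)/2 + 1)
    · have hmeq : (i'+t)/2 = (i'+t₀)/2 := by
        have := dvd_close N ((i'+t)/2 + 1) ((i'+t₀)/2 + 1) hdv ⟨y, hy⟩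
          (by omega) (by omega)
        omega
      have e1 : 2^N * ((z+d)+1) = 2^N * (z+1) + 2^N * d := by ring
      have e2 : 2^N * d = d * 2^N := mul_comm _ _
      have e3 : 2^N * y = 2^N * (z+1) := by rw [hyz]
      rw [hmeq, show (i'+t₀)/2 + d * 2^N = 2^N * ((z+d)+1) - 1 by omega,
        Fb_pow_mul_sub_one, hdF, show (i'+t₀)/2 = 2^N * (z+1) - 1 by omega,
        Fb_pow_mul_sub_one]
    · rw [Fb_shift N _ d hdv]
  · refine ⟨2 * 2^N, by omega, by omega, ?_⟩
    intro t ht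
    rw [← hi' t ht, motzkin_eq, motzkin_eq,
      show (i' + 2 * 2^N + t)/2 = (i'+t)/2 + 1 * 2^N by omega]
    rw [Fb_shift N _ 1 (fun h => hbad ⟨t, ht, h⟩)]
end

section
/- Let P(x) = a₁x⁻¹ + a₀ + a₁x be a symmetric integer Laurent trinomial, p > 2 a prime with p ∤ a₁, and Q(x) any integer Laurent polynomial. Then there exist an integer h ≥ 0 and integers c_0, …, c_h such that ct[P(x)^n Q(x)] ≡ Σ_{i=0}^{h} c_i · ct[P(x)^{n+i}] (mod p) for all n ≥ 0. -/
open LaurentPolynomial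

/-!
Since `P` is invariant under `x ↦ x⁻¹`, so is every `P ^ n`, and hence `ct (P ^ n * Q)` only
sees the symmetric part `Q + Q(x⁻¹)` of `Q` (up to the factor `2`). Symmetric Laurent polynomials
are polynomials in `x + x⁻¹` (via Dickson polynomials), hence in `P = a₁ (x + x⁻¹) + a₀` as soon
as `a₁` is invertible. Writing `Q + Q(x⁻¹) = f(P)` gives `2 ct (P ^ n * Q) = ∑ fᵢ ct (P ^ (n + i))`.
Modulo an odd prime `p ∤ a₁` both `2` and `a₁` are invertible.
-/

namespace LaurentPolynomial

variable {R : Type*} [CommRing R]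

lemma coeff_zero_invert (A : R[T;T⁻¹]) : (invert A).coeff 0 = A.coeff 0 := by
  rw [invert_apply, neg_zero]

lemma T_add_T_neg_mem_adjoin (n : ℤ) :
    (T n + T (-n) : R[T;T⁻¹]) ∈ Algebra.adjoin R {T 1 + T (-1)} := by
  suffices h : ∀ k : ℕ, (T k + T (-k) : R[T;T⁻¹]) ∈ Algebra.adjoin R {T 1 + T (-1)} by
    obtain ⟨k, rfl | rfl⟩ := Int.eq_nat_or_neg n
    · exact h k
    · simpa only [neg_neg, add_comm] using h k
  intro k
  have hdickson := Polynomial.dickson_one_one_eval_add_inv (T 1 : R[T;T⁻¹]) (T (-1))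
    (by rw [← T_add, add_neg_cancel, T_zero]) k
  rw [T_pow, T_pow, mul_one, mul_neg_one, ← map_one (algebraMap R R[T;T⁻¹]),
    ← Polynomial.map_dickson, Polynomial.eval_map_algebraMap] at hdickson
  rw [← hdickson]
  exact Polynomial.aeval_mem_adjoin_singleton R _

lemma add_invert_mem_adjoin (Q : R[T;T⁻¹]) :
    Q + invert Q ∈ Algebra.adjoin R {T 1 + T (-1)} := by
  induction Q using LaurentPolynomial.induction_on' with
  | add p q hp hq =>
    rw [map_add, add_add_add_comm]
    exact add_mem hp hq
  | C_mul_T n r =>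
    have h : C r * T n + invert (C r * T n) = r • (T n + T (-n)) := by
      rw [map_mul, invert_C, invert_T, smul_eq_C_mul, mul_add]
    rw [h]
    exact Subalgebra.smul_mem _ (T_add_T_neg_mem_adjoin n) r

lemma coeff_zero_mul_invert {P : R[T;T⁻¹]} (hP : invert P = P) (Q : R[T;T⁻¹]) :
    (P * invert Q).coeff 0 = (P * Q).coeff 0 := by
  rw [← coeff_zero_invert, map_mul, hP, involutive_invert Q]

lemma coeff_zero_pow_mul_aeval (P : R[T;T⁻¹]) (f : Polynomial R) (n : ℕ) :
    (P ^ n * Polynomial.aeval P f).coeff 0 =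
      ∑ i ∈ Finset.range (f.natDegree + 1), f.coeff i * (P ^ (n + i)).coeff 0 := by
  simp only [Polynomial.aeval_eq_sum_range, Finset.mul_sum, mul_smul_comm, ← pow_add,
    AddMonoidAlgebra.coeff_sum, Finsupp.finsetSum_apply, AddMonoidAlgebra.coeff_smul,
    Finsupp.smul_apply, smul_eq_mul]

noncomputable def symmTrinomial (a₁ a₀ : R) : R[T;T⁻¹] := C a₁ * T (-1) + C a₀ + C a₁ * T 1

variable (a₁ a₀ : R)

lemma invert_symmTrinomial : invert (symmTrinomial a₁ a₀) = symmTrinomial a₁ a₀ := by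
  simp only [symmTrinomial, map_add, map_mul, invert_C, invert_T, neg_neg]
  ring

variable {a₁} in
lemma adjoin_T_add_T_neg_le_adjoin_symmTrinomial (ha₁ : IsUnit a₁) :
    Algebra.adjoin R {T 1 + T (-1)} ≤ Algebra.adjoin R {symmTrinomial a₁ a₀} := by
  have h : (T 1 + T (-1) : R[T;T⁻¹]) = C (↑ha₁.unit⁻¹ : R) * (symmTrinomial a₁ a₀ - C a₀) := by
    rw [symmTrinomial, add_right_comm, add_sub_cancel_right, ← mul_add, ← mul_assoc, ← map_mul,
      ha₁.val_inv_mul, map_one, one_mul, add_comm]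
  refine Algebra.adjoin_singleton_le ?_
  rw [h, C_eq_algebraMap, C_eq_algebraMap]
  exact mul_mem (Subalgebra.algebraMap_mem _ _)
    (sub_mem (Algebra.self_mem_adjoin_singleton R _) (Subalgebra.algebraMap_mem _ _))

variable {a₁} in
theorem exists_coeff_zero_pow_symmTrinomial_mul_eq_sum (h2 : IsUnit (2 : R))
    (ha₁ : IsUnit a₁) (Q : R[T;T⁻¹]) :
    ∃ (h : ℕ) (c : ℕ → R), ∀ n : ℕ,
      (symmTrinomial a₁ a₀ ^ n * Q).coeff 0 =
        ∑ i ∈ Finset.range (h + 1), c i * (symmTrinomial a₁ a₀ ^ (n + i)).coeff 0 := by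
  set P := symmTrinomial a₁ a₀
  obtain ⟨f, hf⟩ : Q + invert Q ∈ Set.range (Polynomial.aeval (R := R) P) := by
    rw [← AlgHom.coe_range, ← Algebra.adjoin_singleton_eq_range_aeval]
    exact adjoin_T_add_T_neg_le_adjoin_symmTrinomial a₀ ha₁ (add_invert_mem_adjoin Q)
  refine ⟨f.natDegree, fun i => ↑h2.unit⁻¹ * f.coeff i, fun n => ?_⟩
  have hsym : 2 * (P ^ n * Q).coeff 0 = (P ^ n * (Q + invert Q)).coeff 0 := by
    rw [mul_add, AddMonoidAlgebra.coeff_add, Finsupp.add_apply,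
      coeff_zero_mul_invert (by rw [map_pow, invert_symmTrinomial]), two_mul]
  simp only [mul_assoc, ← Finset.mul_sum, ← coeff_zero_pow_mul_aeval, hf, ← hsym]
  rw [← mul_assoc, h2.val_inv_mul, one_mul]

lemma mapRingHom_symmTrinomial {S : Type*} [CommRing S] (φ : R →+* S) :
    AddMonoidAlgebra.mapRingHom ℤ φ (symmTrinomial a₁ a₀) = symmTrinomial (φ a₁) (φ a₀) := by
  have hC (r : R) : AddMonoidAlgebra.mapRingHom ℤ φ (C r) = C (φ r) :=
    AddMonoidAlgebra.mapRingHom_single φ 0 r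
  have hT (n : ℤ) : AddMonoidAlgebra.mapRingHom ℤ φ (T n) = T n :=
    (AddMonoidAlgebra.mapRingHom_single φ n 1).trans (by rw [map_one]; rfl)
  simp only [symmTrinomial, map_add, map_mul, hC, hT]

end LaurentPolynomial

theorem stmt_19 (a1 a0 : ℤ) (p : ℕ) (hp : p.Prime) (hp2 : 2 < p) (ha1 : ¬ (p : ℤ) ∣ a1)
    (Q : LaurentPolynomial ℤ) :
    ∃ (h : ℕ) (c : ℕ → ℤ), ∀ n : ℕ,
      ct ((C a1 * T (-1) + C a0 + C a1 * T 1) ^ n * Q) ≡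
        ∑ i ∈ Finset.range (h + 1),
          c i * ct ((C a1 * T (-1) + C a0 + C a1 * T 1) ^ (n + i)) [ZMOD (p : ℤ)] := by
  have := Fact.mk hp
  set φ : ℤ[T;T⁻¹] →+* (ZMod p)[T;T⁻¹] := AddMonoidAlgebra.mapRingHom ℤ (Int.castRingHom _)
  have h2 : IsUnit (2 : ZMod p) := by
    refine Ne.isUnit fun h => ?_
    have := Nat.le_of_dvd two_pos ((ZMod.natCast_eq_zero_iff 2 p).1 (by exact_mod_cast h))
    omega
  have ha1' : IsUnit (a1 : ZMod p) :=
    Ne.isUnit fun h => ha1 ((ZMod.intCast_zmod_eq_zero_iff_dvd a1 p).1 h)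
  obtain ⟨h, c, hc⟩ := exists_coeff_zero_pow_symmTrinomial_mul_eq_sum (a0 : ZMod p) h2 ha1' (φ Q)
  refine ⟨h, fun i => (c i).cast, fun n => ?_⟩
  change ct (symmTrinomial a1 a0 ^ n * Q) ≡
    ∑ i ∈ Finset.range (h + 1), (c i).cast * ct (symmTrinomial a1 a0 ^ (n + i)) [ZMOD p]
  have hct (A : ℤ[T;T⁻¹]) : ((ct A : ℤ) : ZMod p) = (φ A).coeff 0 :=
    (AddMonoidAlgebra.coeff_mapRingHom (Int.castRingHom (ZMod p)) A 0).symm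
  have hP : φ (symmTrinomial a1 a0) = symmTrinomial (a1 : ZMod p) (a0 : ZMod p) :=
    mapRingHom_symmTrinomial a1 a0 _
  rw [← ZMod.intCast_eq_intCast_iff]
  push_cast
  simp only [hct, map_mul, map_pow, hP]
  exact hc n
end
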